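/- arXiv:2203.01105 — 8 statements merged into one kernel-verified Lean document; each statement's English description precedes it below -/
import Mathlib

section
/- Let g be a finite-dimensional central simple Lie algebra over a field F of characteristic 0, and let Ann(g) ⊆ U(g) be the two-sided ideal of elements of the universal enveloping algebra acting as zero on the adjoint module g. If V is a finite-dimensional irreducible g-module with Ann(g)·V = 0, then V is isomorphic to the adjoint module g. -/
/-!
Through the universal enveloping algebra `U`, `L` and `V` become simple `U`-modules. Evaluating
on a finite spanning family of `L` embeds `U ⧸ Ann(L)` into a finite power of `L`, so it is a
semisimple module all of whose simple submodules are isomorphic to `L` by Schur's lemma. As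
`Ann(L)` kills `V`, the simple module `V` is a quotient of `U ⧸ Ann(L)`, hence, by
semisimplicity, one of its submodules, hence isomorphic to `L`.
-/

section SimpleModule

variable {R M N : Type*} [Ring R] [AddCommGroup M] [Module R M] [AddCommGroup N] [Module R N]

open LinearMap

theorem IsSimpleModule.nonempty_linearEquiv_of_injective_pi [IsSimpleModule R M]
    [IsSimpleModule R N] {ι : Type*} {f : N →ₗ[R] ι → M} (hf : Function.Injective f) :
    Nonempty (N ≃ₗ[R] M) := by
  have := IsSimpleModule.nontrivial R N
  obtain ⟨v, hv⟩ := exists_ne (0 : N)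
  obtain ⟨i, hi⟩ := Function.ne_iff.mp ((map_ne_zero_iff f hf).mpr hv)
  have hfi : proj i ∘ₗ f ≠ 0 := fun h ↦ hi (congr($h v))
  exact ⟨.ofBijective _ (bijective_of_ne_zero hfi)⟩

theorem IsSemisimpleModule.exists_injective_of_surjective [IsSemisimpleModule R M]
    {f : M →ₗ[R] N} (hf : Function.Surjective f) : ∃ g : N →ₗ[R] M, Function.Injective g := by
  obtain ⟨P, ⟨e⟩⟩ := IsSemisimpleModule.exists_submodule_linearEquiv_quotient (ker f)
  exact ⟨P.subtype ∘ₗ (e.symm ∘ₗ (f.quotKerEquivOfSurjective hf).symm.toLinearMap),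
    P.injective_subtype.comp (e.symm.injective.comp (LinearEquiv.injective _))⟩

theorem IsSimpleModule.nonempty_linearEquiv_of_forall_smul_eq_zero [IsSimpleModule R M]
    [IsSimpleModule R N] {ι : Type*} [Finite ι] (x : ι → M)
    (hx : ∀ r : R, (∀ i, r • x i = 0) → ∀ v : N, r • v = 0) : Nonempty (N ≃ₗ[R] M) := by
  have := IsSimpleModule.nontrivial R N
  obtain ⟨v, hv⟩ := exists_ne (0 : N)
  let φ : R →ₗ[R] ι → M := pi fun i ↦ toSpanSingleton R M (x i)
  have hker : ker φ ≤ ker (toSpanSingleton R N v) := fun r hr ↦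
    hx r (fun i ↦ congr_fun hr i) v
  have hφ : Function.Injective ((ker φ).liftQ φ le_rfl) :=
    ker_eq_bot.mp (Submodule.ker_liftQ_eq_bot' _ φ rfl)
  have : IsSemisimpleModule R (R ⧸ ker φ) := .of_injective _ hφ
  have hπ : Function.Surjective ((ker φ).liftQ _ hker) := by
    rw [← range_eq_top, Submodule.range_liftQ, range_eq_top]
    exact IsSimpleModule.toSpanSingleton_surjective R hv
  obtain ⟨g, hg⟩ := IsSemisimpleModule.exists_injective_of_surjective hπ
  exact nonempty_linearEquiv_of_injective_pi (f := (ker φ).liftQ φ le_rfl ∘ₗ g) (hφ.comp hg)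

end SimpleModule

namespace LieModule

open UniversalEnvelopingAlgebra

variable (R L M : Type*) [CommRing R] [LieRing L] [LieAlgebra R L]
  [AddCommGroup M] [Module R M] [LieRingModule L M] [LieModule R L M]

abbrev ueaModule : Module (UniversalEnvelopingAlgebra R L) M :=
  Module.compHom M (lift R (toEnd R L M)).toRingHom

section

attribute [local instance] ueaModule

variable {R L M}

theorem uea_smul_def (u : UniversalEnvelopingAlgebra R L) (m : M) :
    u • m = lift R (toEnd R L M) u m :=
  rfl

@[simp]
theorem ι_smul (x : L) (m : M) : ι R x • m = ⁅x, m⁆ := by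
  rw [uea_smul_def, lift_ι_apply, toEnd_apply_apply]

@[simp]
theorem algebraMap_uea_smul (c : R) (m : M) :
    algebraMap R (UniversalEnvelopingAlgebra R L) c • m = c • m := by
  rw [uea_smul_def, AlgHom.commutes, Module.algebraMap_end_apply]

variable (R L) in
def lieSubmoduleOfUEA (p : Submodule (UniversalEnvelopingAlgebra R L) M) :
    LieSubmodule R L M where
  carrier := p
  add_mem' := p.add_mem
  zero_mem' := p.zero_mem
  smul_mem' c m hm := algebraMap_uea_smul (L := L) c m ▸ p.smul_mem (algebraMap R _ c) hm
  lie_mem {x m} hm := ι_smul (R := R) x m ▸ p.smul_mem (ι R x) hm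

instance isSimpleModule_uea [IsIrreducible R L M] :
    IsSimpleModule (UniversalEnvelopingAlgebra R L) M := by
  have := nontrivial_of_isIrreducible R L M
  refine (isSimpleModule_iff _ _).mpr (.of_forall_eq_top fun p hp ↦ ?_)
  have : lieSubmoduleOfUEA R L p = ⊤ :=
    (eq_bot_or_eq_top _).resolve_left fun h ↦ hp (by ext m; exact congr(m ∈ $h))
  ext m; exact congr(m ∈ $this)

variable {N : Type*} [AddCommGroup N] [Module R N] [LieRingModule L N] [LieModule R L N]

def lieModuleEquivOfUEA (e : M ≃ₗ[UniversalEnvelopingAlgebra R L] N) : M ≃ₗ⁅R,L⁆ N where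
  toFun := e
  map_add' := e.map_add
  invFun := e.symm
  left_inv := e.left_inv
  right_inv := e.right_inv
  map_smul' c m := by
    simpa only [algebraMap_uea_smul, RingHom.id_apply] using e.map_smul (algebraMap R _ c) m
  map_lie' {x m} := by simpa only [ι_smul] using e.map_smul (ι R x) m

theorem nonempty_lieModuleEquiv_of_forall_lift_eq_zero [Module.Finite R M] [IsIrreducible R L M]
    [IsIrreducible R L N]
    (h : ∀ u : UniversalEnvelopingAlgebra R L,
      lift R (toEnd R L M) u = 0 → lift R (toEnd R L N) u = 0) :
    Nonempty (N ≃ₗ⁅R,L⁆ M) := by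
  obtain ⟨s, hs⟩ := Module.Finite.fg_top (R := R) (M := M)
  have hx : ∀ u : UniversalEnvelopingAlgebra R L, (∀ i : s, u • (i : M) = 0) →
      ∀ n : N, u • n = 0 := by
    intro u hu n
    have : lift R (toEnd R L M) u = 0 := LinearMap.ext_on hs fun m hm ↦ hu ⟨m, hm⟩
    rw [uea_smul_def, h u this, LinearMap.zero_apply]
  obtain ⟨e⟩ := IsSimpleModule.nonempty_linearEquiv_of_forall_smul_eq_zero _ hx
  exact ⟨lieModuleEquivOfUEA e⟩

end

end LieModule

theorem irreducible_module_killed_by_ann_iso_adjoint_general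
    (F L V : Type*) [Field F]
    [LieRing L] [LieAlgebra F L] [FiniteDimensional F L] [LieAlgebra.IsSimple F L]
    [AddCommGroup V] [Module F V] [LieRingModule L V] [LieModule F L V]
    [LieModule.IsIrreducible F L V]
    -- `Ann(g) · V = 0`: every element of `U(g)` acting as zero on the adjoint module
    -- also acts as zero on `V`
    (hann : ∀ x : UniversalEnvelopingAlgebra F L,
      UniversalEnvelopingAlgebra.lift F (LieModule.toEnd F L L) x = 0 →
      UniversalEnvelopingAlgebra.lift F (LieModule.toEnd F L V) x = 0) :
    Nonempty (V ≃ₗ⁅F,L⁆ L) :=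
  LieModule.nonempty_lieModuleEquiv_of_forall_lift_eq_zero hann

/-- Let `g` be a finite-dimensional central simple Lie algebra over a field
`F` of characteristic `0`, and let `Ann(g) ⊆ U(g)` be the ideal of elements of the universal
enveloping algebra acting as zero on the adjoint module `g`.  If `V` is a finite-dimensional
irreducible `g`-module with `Ann(g)·V = 0`, then `V` is isomorphic to the adjoint module `g`. -/
theorem irreducible_module_killed_by_ann_iso_adjoint
    (F L V : Type*) [Field F] [CharZero F]
    [LieRing L] [LieAlgebra F L] [FiniteDimensional F L] [LieAlgebra.IsSimple F L]
    -- `L` is central: its centroid consists of the scalar multiples of the identity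
    (hcentral : ∀ f : Module.End F L,
      (∀ a b : L, f ⁅a, b⁆ = ⁅a, f b⁆ ∧ f ⁅a, b⁆ = ⁅f a, b⁆) →
      ∃ c : F, f = c • (LinearMap.id : L →ₗ[F] L))
    [AddCommGroup V] [Module F V] [LieRingModule L V] [LieModule F L V]
    [FiniteDimensional F V] [LieModule.IsIrreducible F L V]
    -- `Ann(g) · V = 0`: every element of `U(g)` acting as zero on the adjoint module
    -- also acts as zero on `V`
    (hann : ∀ x : UniversalEnvelopingAlgebra F L,
      UniversalEnvelopingAlgebra.lift F (LieModule.toEnd F L L) x = 0 →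
      UniversalEnvelopingAlgebra.lift F (LieModule.toEnd F L V) x = 0) :
    Nonempty (V ≃ₗ⁅F,L⁆ L) :=
  irreducible_module_killed_by_ann_iso_adjoint_general F L V hann
end

section
/- Let A be a unital alternative F-algebra over a field F with char(F) ≠ 3. If A is commutative, then A is associative. -/
/-- Let `A` be a unital alternative algebra over a field `F` with
`char F ≠ 3`.  If `A` is commutative, then `A` is associative. -/
theorem commutative_alternative_is_associative
    (F A : Type*) [Field F] (hchar : (3 : F) ≠ 0)
    [NonAssocRing A] [Module F A] [SMulCommClass F A A] [IsScalarTower F A A]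
    (halt₁ : ∀ x y : A, x * (x * y) = (x * x) * y)
    (halt₂ : ∀ x y : A, (y * x) * x = y * (x * x))
    (hcomm : ∀ x y : A, x * y = y * x) :
    ∀ x y z : A, (x * y) * z = x * (y * z) := by
  -- associator
  set a : A → A → A → A := fun x y z => (x * y) * z - x * (y * z) with ha
  -- skew-symmetry in the last two slots (linearized halt₂)
  have h1 : ∀ x y z : A, a x y z = - a x z y := by
    intro x y z
    have h := halt₂ (y + z) x
    simp only [mul_add, add_mul] at h
    rw [halt₂ y x, halt₂ z x] at h
    have hz : (x * y) * z + (x * z) * y = x * (y * z) + x * (z * y) := by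
      linear_combination (norm := abel) h
    rw [eq_neg_iff_add_eq_zero]
    simp only [ha]
    rw [sub_add_sub_comm, hz, sub_self]
  -- cyclic invariance via outer swap (pure commutativity) + h1
  have h2 : ∀ x y z : A, a x y z = - a z y x := by
    intro x y z
    simp only [ha]
    rw [hcomm (x*y) z, hcomm x (y*z), hcomm x y, hcomm y z]
    abel
  have h3 : ∀ x y z : A, a x y z = a z x y := by
    intro x y z
    rw [h1 z x y, ← h2 x y z]
  -- cyclic sum vanishes (pure commutativity)
  have h4 : ∀ x y z : A, a x y z + a y z x + a z x y = 0 := by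
    intro x y z
    simp only [ha]
    rw [hcomm x (y*z), hcomm y (z*x), hcomm z (x*y)]
    abel
  intro x y z
  have h5 : a x y z + a x y z + a x y z = 0 := by
    have t := h4 x y z
    rw [h3 y z x, ← h3 x y z] at t
    exact t
  have h6 : (3 : F) • a x y z = 0 := by
    have e : ((1 : F) + 1 + 1) • a x y z = a x y z + a x y z + a x y z := by
      rw [add_smul, add_smul, one_smul]
    rw [show (3 : F) = 1 + 1 + 1 by norm_num, e, h5]
  have h7 : a x y z = 0 := by
    rcases smul_eq_zero.mp h6 with h | h
    · exact absurd h hchar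
    · exact h
  exact sub_eq_zero.mp h7
end

section
/- Let a be a finite-dimensional central simple F-algebra (not necessarily associative) and A a unital commutative associative F-algebra. Then every F-algebra automorphism of a ⊗ A is the composition of an automorphism induced by an F-algebra automorphism of A (acting on the second tensor factor) and an A-algebra automorphism of a ⊗ A; i.e. Aut_{F-Alg}(a ⊗ A) = Aut_{F-Alg}(A) ⋉ Aut_{A-Alg}(a ⊗ A). -/
/-!
The centroid of `a ⊗ A` is `A`, acting through `γ_p = id ⊗ (p * ·)`. Indeed, contracting the
`A`-factor of a centroidal `f` against a linear form on `A` gives a centroidal map of `a`, hence a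
scalar, and this forces `f (x ⊗ 1) = x ⊗ p` for a single `p`; since `a ⊗ A` is perfect its centroid
is commutative, so `f` commutes with every `γ_q` and therefore `f = γ_p`. An automorphism `φ` of
`a ⊗ A` preserves the centroid, so conjugation by `φ` is an automorphism `ψ` of `A`, and
`χ = φ ∘ (id ⊗ ψ)⁻¹` then commutes with every `γ_p`.
-/

open TensorProduct

namespace TensorProduct

variable {K V W : Type*}

section CommSemiring

variable [CommSemiring K] [AddCommMonoid V] [Module K V] [AddCommMonoid W] [Module K W]

def rightContraction (μ : Module.Dual K W) : V ⊗[K] W →ₗ[K] V :=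
  (TensorProduct.rid K V).toLinearMap ∘ₗ LinearMap.lTensor V μ

def leftContraction (ν : Module.Dual K V) : V ⊗[K] W →ₗ[K] W :=
  (TensorProduct.lid K W).toLinearMap ∘ₗ LinearMap.rTensor W ν

@[simp] theorem rightContraction_tmul (μ : Module.Dual K W) (v : V) (w : W) :
    rightContraction μ (v ⊗ₜ w) = μ w • v := rfl

@[simp] theorem leftContraction_tmul (ν : Module.Dual K V) (v : V) (w : W) :
    leftContraction ν (v ⊗ₜ w) = ν v • w := rfl

theorem apply_leftContraction (μ : Module.Dual K W) (ν : Module.Dual K V) (u : V ⊗[K] W) :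
    μ (leftContraction ν u) = ν (rightContraction μ u) := by
  induction u using TensorProduct.induction_on with
  | zero => simp
  | tmul v w => simp [mul_comm]
  | add u₁ u₂ h₁ h₂ => simp [h₁, h₂]

end CommSemiring

variable [Field K] [AddCommGroup V] [Module K V] [AddCommGroup W] [Module K W]

theorem eq_zero_of_forall_rightContraction_eq_zero {u : V ⊗[K] W}
    (h : ∀ μ : Module.Dual K W, rightContraction μ u = 0) : u = 0 := by
  classical
  let e := Module.Free.chooseBasis K W
  have hcoord : ∀ (u : V ⊗[K] W) i, TensorProduct.equivFinsuppOfBasisRight e u i =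
      rightContraction (e.coord i) u := by
    intro u i
    induction u using TensorProduct.induction_on with
    | zero => simp
    | tmul v w => simp
    | add u₁ u₂ h₁ h₂ => simp [h₁, h₂]
  refine (TensorProduct.equivFinsuppOfBasisRight e).injective (Finsupp.ext fun i ↦ ?_)
  simp [hcoord, h]

theorem exists_forall_eq_tmul_of_rightContraction [Nontrivial V] (g : V →ₗ[K] V ⊗[K] W)
    (hg : ∀ μ : Module.Dual K W, ∃ c : K, rightContraction μ ∘ₗ g = c • LinearMap.id) :
    ∃ w : W, ∀ v, g v = v ⊗ₜ w := by
  obtain ⟨v₀, hv₀⟩ := exists_ne (0 : V)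
  obtain ⟨ν, hν⟩ := Module.Projective.exists_dual_eq_one K hv₀
  -- as `ν v₀ = 1`, the contractions of `w` against each `μ` are the scalars `c` attached to `μ`
  refine ⟨leftContraction ν (g v₀), fun v ↦ sub_eq_zero.1 <|
    eq_zero_of_forall_rightContraction_eq_zero fun μ ↦ ?_⟩
  obtain ⟨c, hc⟩ := hg μ
  have hcv : ∀ v, rightContraction μ (g v) = c • v := fun v ↦ LinearMap.congr_fun hc v
  rw [map_sub, hcv, rightContraction_tmul, apply_leftContraction, hcv, map_smul, hν,
    smul_eq_mul, mul_one, sub_self]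

end TensorProduct

theorem LinearEquiv.symm_map_mul {R M N : Type*} [Semiring R] [NonUnitalNonAssocSemiring M]
    [NonUnitalNonAssocSemiring N] [Module R M] [Module R N] {e : M ≃ₗ[R] N}
    (he : ∀ x y, e (x * y) = e x * e y) (x y : N) : e.symm (x * y) = e.symm x * e.symm y :=
  e.injective (by rw [he, e.apply_symm_apply, e.apply_symm_apply, e.apply_symm_apply])

theorem AlgHom.exists_algEquiv_of_map_range_eq {R A B : Type*} [CommSemiring R] [Semiring A]
    [Semiring B] [Algebra R A] [Algebra R B] (γ : A →ₐ[R] B) (hγ : Function.Injective γ)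
    (σ : B ≃ₐ[R] B) (h : γ.range.map (σ : B →ₐ[R] B) = γ.range) :
    ∃ ψ : A ≃ₐ[R] A, ∀ p, γ (ψ p) = σ (γ p) := by
  let e := AlgEquiv.ofInjective γ hγ
  refine ⟨e.trans ((σ.subalgebraMap γ.range).trans ((Subalgebra.equivOfEq _ _ h).trans e.symm)),
    fun p ↦ ?_⟩
  have he : ∀ s, γ (e.symm s) = s := fun s ↦ by
    rw [← AlgEquiv.ofInjective_apply γ hγ, AlgEquiv.apply_symm_apply]
  simp [he, e]

section Centroid

variable (F M : Type*) [CommSemiring F] [NonUnitalNonAssocSemiring M] [Module F M]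

def IsPerfect : Prop := Submodule.span F {z : M | ∃ x y, x * y = z} = ⊤

variable {F M} in
theorem isPerfect_of_isSimple (h₁ : ∃ x y : M, x * y ≠ 0)
    (h₂ : ∀ I : Submodule F M, (∀ x ∈ I, ∀ y, x * y ∈ I ∧ y * x ∈ I) → I = ⊥ ∨ I = ⊤) :
    IsPerfect F M := by
  refine (h₂ (Submodule.span F {z : M | ∃ x y, x * y = z}) fun x _ y ↦
    ⟨Submodule.subset_span ⟨x, y, rfl⟩, Submodule.subset_span ⟨y, x, rfl⟩⟩).resolve_left
    fun hbot ↦ ?_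
  obtain ⟨x, y, hxy⟩ := h₁
  have : x * y ∈ Submodule.span F {z : M | ∃ x y, x * y = z} := Submodule.subset_span ⟨x, y, rfl⟩
  exact hxy (by simpa [hbot] using this)

variable [SMulCommClass F M M] [IsScalarTower F M M]

def centroid : Subalgebra F (Module.End F M) where
  carrier := {f | ∀ x y, f (x * y) = f x * y ∧ f (x * y) = x * f y}
  mul_mem' {f g} hf hg x y := by
    simp only [Set.mem_ofPred_eq, Module.End.mul_apply] at *
    exact ⟨by rw [(hg x y).1, (hf _ _).1], by rw [(hg x y).2, (hf _ _).2]⟩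
  add_mem' hf hg x y := by
    simp only [Set.mem_ofPred_eq, LinearMap.add_apply] at *
    exact ⟨by rw [(hf x y).1, (hg x y).1, add_mul], by rw [(hf x y).2, (hg x y).2, mul_add]⟩
  algebraMap_mem' c x y := ⟨(smul_mul_assoc c x y).symm, (mul_smul_comm c x y).symm⟩

variable {F M}

theorem IsPerfect.commute_of_mem_centroid (hM : IsPerfect F M) {f g : Module.End F M}
    (hf : f ∈ centroid F M) (hg : g ∈ centroid F M) : Commute f g := by
  refine LinearMap.ext_on hM ?_
  rintro _ ⟨x, y, rfl⟩
  simp only [Module.End.mul_apply]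
  rw [(hg x y).2, (hf x (g y)).1, (hf x y).1, (hg (f x) y).2]

variable {N : Type*} [NonUnitalNonAssocSemiring N] [Module F N]
  [SMulCommClass F N N] [IsScalarTower F N N]

theorem conjAlgEquiv_mem_centroid {e : M ≃ₗ[F] N} (he : ∀ x y, e (x * y) = e x * e y)
    {f : Module.End F M} (hf : f ∈ centroid F M) : e.conjAlgEquiv F f ∈ centroid F N := by
  intro x y
  simp only [LinearEquiv.conjAlgEquiv_apply, LinearMap.comp_apply, LinearEquiv.coe_coe,
    LinearEquiv.symm_map_mul he]
  constructor
  · rw [(hf _ _).1, he, e.apply_symm_apply]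
  · rw [(hf _ _).2, he, e.apply_symm_apply]

theorem map_centroid_conjAlgEquiv {e : M ≃ₗ[F] N} (he : ∀ x y, e (x * y) = e x * e y) :
    (centroid F M).map (e.conjAlgEquiv F : Module.End F M →ₐ[F] Module.End F N) =
      centroid F N := by
  refine le_antisymm (Subalgebra.map_le.2 fun f hf ↦ conjAlgEquiv_mem_centroid he hf)
    fun g hg ↦ ⟨_, conjAlgEquiv_mem_centroid (LinearEquiv.symm_map_mul he) hg, ?_⟩
  exact (e.conjAlgEquiv F).apply_symm_apply g

end Centroid

section TensorAction

variable (F a A : Type*) [CommSemiring F] [AddCommMonoid a] [Module F a]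
  [CommSemiring A] [Algebra F A]

def lTensorMulLeft : A →ₐ[F] Module.End F (a ⊗[F] A) :=
  (Module.End.lTensorAlgHom F A a).comp (Algebra.lmul F A)

variable {F a A}

@[simp] theorem lTensorMulLeft_tmul (p : A) (x : a) (q : A) :
    lTensorMulLeft F a A p (x ⊗ₜ q) = x ⊗ₜ (p * q) := rfl

theorem lTensor_comp_lTensorMulLeft {B : Type*} [CommSemiring B] [Algebra F B] (σ : A →ₐ[F] B)
    (p : A) : LinearMap.lTensor a σ.toLinearMap ∘ₗ lTensorMulLeft F a A p =
      lTensorMulLeft F a B (σ p) ∘ₗ LinearMap.lTensor a σ.toLinearMap :=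
  TensorProduct.ext' fun x q ↦ by simp

end TensorAction

section TensorAlgebra

variable {F a A : Type*} [CommSemiring F] [NonUnitalNonAssocSemiring a] [Module F a]
  [SMulCommClass F a a] [IsScalarTower F a a] [CommSemiring A] [Algebra F A]

theorem lTensor_algHom_mul {B : Type*} [Semiring B] [Algebra F B] (σ : A →ₐ[F] B)
    (u v : a ⊗[F] A) :
    LinearMap.lTensor a σ.toLinearMap (u * v) =
      LinearMap.lTensor a σ.toLinearMap u * LinearMap.lTensor a σ.toLinearMap v := by
  induction u using TensorProduct.induction_on with
  | zero => simp
  | tmul x q =>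
    induction v using TensorProduct.induction_on with
    | zero => simp
    | tmul y r => simp
    | add v₁ v₂ h₁ h₂ => simp only [mul_add, map_add, h₁, h₂]
  | add u₁ u₂ h₁ h₂ => simp only [add_mul, map_add, h₁, h₂]

theorem IsPerfect.tensorProduct (ha : IsPerfect F a) : IsPerfect F (a ⊗[F] A) := by
  rw [IsPerfect, eq_top_iff, ← TensorProduct.span_tmul_eq_top, Submodule.span_le]
  rintro _ ⟨x, p, rfl⟩
  suffices ha' : Submodule.span F {z : a | ∃ x y, x * y = z} ≤
      (Submodule.span F {z : a ⊗[F] A | ∃ u v, u * v = z}).comap ((mk F a A).flip p) from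
    ha' (ha ▸ Submodule.mem_top)
  refine Submodule.span_le.2 ?_
  rintro _ ⟨y, z, rfl⟩
  exact Submodule.subset_span ⟨y ⊗ₜ 1, z ⊗ₜ p, by simp⟩

theorem lTensorMulLeft_mem_centroid (p : A) :
    lTensorMulLeft F a A p ∈ centroid F (a ⊗[F] A) := by
  intro u v
  induction u using TensorProduct.induction_on with
  | zero => simp
  | tmul x q =>
    induction v using TensorProduct.induction_on with
    | zero => simp
    | tmul y r => exact ⟨by simp [mul_assoc], by simp [mul_left_comm]⟩
    | add v₁ v₂ h₁ h₂ =>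
      simp only [mul_add, map_add]
      exact ⟨by rw [h₁.1, h₂.1], by rw [h₁.2, h₂.2]⟩
  | add u₁ u₂ h₁ h₂ =>
    simp only [add_mul, map_add]
    exact ⟨by rw [h₁.1, h₂.1], by rw [h₁.2, h₂.2]⟩

theorem rightContraction_mul_tmul_one (μ : Module.Dual F A) (w : a ⊗[F] A) (y : a) :
    rightContraction μ (w * y ⊗ₜ 1) = rightContraction μ w * y := by
  induction w using TensorProduct.induction_on with
  | zero => simp
  | tmul z q => simp [smul_mul_assoc]
  | add w₁ w₂ h₁ h₂ => simp only [add_mul, map_add, h₁, h₂]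

theorem rightContraction_tmul_one_mul (μ : Module.Dual F A) (x : a) (w : a ⊗[F] A) :
    rightContraction μ (x ⊗ₜ 1 * w) = x * rightContraction μ w := by
  induction w using TensorProduct.induction_on with
  | zero => simp
  | tmul z q => simp [mul_smul_comm]
  | add w₁ w₂ h₁ h₂ => simp only [mul_add, map_add, h₁, h₂]

theorem rightContraction_comp_mem_centroid (μ : Module.Dual F A) {f : Module.End F (a ⊗[F] A)}
    (hf : f ∈ centroid F (a ⊗[F] A)) :
    rightContraction μ ∘ₗ f ∘ₗ (TensorProduct.mk F a A).flip 1 ∈ centroid F a := by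
  intro x y
  have hxy : (x * y) ⊗ₜ[F] (1 : A) = x ⊗ₜ 1 * y ⊗ₜ 1 := by simp
  simp only [LinearMap.comp_apply, LinearMap.flip_apply, TensorProduct.mk_apply, hxy]
  exact ⟨by rw [(hf _ _).1, rightContraction_mul_tmul_one],
    by rw [(hf _ _).2, rightContraction_tmul_one_mul]⟩

end TensorAlgebra

section Field

variable {F a A : Type*} [Field F]

theorem lTensorMulLeft_injective [AddCommGroup a] [Module F a] [Nontrivial a] [CommSemiring A]
    [Algebra F A] : Function.Injective (lTensorMulLeft F a A) := by
  intro p q h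
  obtain ⟨x, hx⟩ := exists_ne (0 : a)
  obtain ⟨ν, hν⟩ := Module.Projective.exists_dual_eq_one F hx
  simpa [hν] using congrArg (leftContraction ν) (LinearMap.congr_fun h (x ⊗ₜ 1))

variable [NonUnitalNonAssocRing a] [Module F a] [SMulCommClass F a a] [IsScalarTower F a a]
  [CommRing A] [Algebra F A]

theorem range_lTensorMulLeft [Nontrivial a] (ha : IsPerfect F a) (hcentral : centroid F a = ⊥) :
    (lTensorMulLeft F a A).range = centroid F (a ⊗[F] A) := by
  refine le_antisymm (fun _ ⟨p, hp⟩ ↦ hp ▸ lTensorMulLeft_mem_centroid p) fun f hf ↦ ?_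
  obtain ⟨p, hp⟩ := exists_forall_eq_tmul_of_rightContraction
    (f ∘ₗ (TensorProduct.mk F a A).flip 1) fun μ ↦ by
      obtain ⟨c, hc⟩ := Algebra.mem_bot.1 (hcentral ▸ rightContraction_comp_mem_centroid μ hf)
      exact ⟨c, by rw [← hc, Module.algebraMap_end_eq_smul_id]⟩
  refine ⟨p, TensorProduct.ext' fun x q ↦ ?_⟩
  have hcomm : f ∘ₗ lTensorMulLeft F a A q = lTensorMulLeft F a A q ∘ₗ f :=
    ha.tensorProduct.commute_of_mem_centroid hf (lTensorMulLeft_mem_centroid q)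
  calc lTensorMulLeft F a A p (x ⊗ₜ q) = lTensorMulLeft F a A q (f (x ⊗ₜ 1)) := by
        rw [show f (x ⊗ₜ 1) = x ⊗ₜ p from hp x, lTensorMulLeft_tmul, lTensorMulLeft_tmul,
          mul_comm]
    _ = f (x ⊗ₜ q) := by simpa using (LinearMap.congr_fun hcomm (x ⊗ₜ 1)).symm

end Field

theorem aut_tensor_splits_general
    (F a A : Type*) [Field F]
    [NonUnitalNonAssocRing a] [Module F a] [SMulCommClass F a a] [IsScalarTower F a a]
    -- `a` is simple: nontrivial multiplication and no proper nonzero two-sided ideals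
    (hsimple₁ : ∃ x y : a, x * y ≠ 0)
    (hsimple₂ : ∀ I : Submodule F a,
      (∀ x ∈ I, ∀ y : a, x * y ∈ I ∧ y * x ∈ I) → I = ⊥ ∨ I = ⊤)
    -- `a` is central: its centroid consists of scalar multiples of the identity
    (hcentral : ∀ f : Module.End F a,
      (∀ x y : a, f (x * y) = f x * y ∧ f (x * y) = x * f y) →
      ∃ c : F, f = c • (LinearMap.id : a →ₗ[F] a))
    [CommRing A] [Algebra F A]
    (φ : a ⊗[F] A ≃ₗ[F] a ⊗[F] A)
    (hφ : ∀ u v : a ⊗[F] A, φ (u * v) = φ u * φ v) :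
    ∃ ψ : A ≃ₐ[F] A, ∃ χ : a ⊗[F] A ≃ₗ[F] a ⊗[F] A,
      (∀ u v : a ⊗[F] A, χ (u * v) = χ u * χ v) ∧
      (∀ (p : A) (u : a ⊗[F] A),
        χ (LinearMap.lTensor a (LinearMap.mulLeft F p) u)
          = LinearMap.lTensor a (LinearMap.mulLeft F p) (χ u)) ∧
      φ = (LinearEquiv.lTensor a ψ.toLinearEquiv).trans χ := by
  obtain ⟨x, y, hxy⟩ := hsimple₁
  have : Nontrivial a := ⟨⟨x * y, 0, hxy⟩⟩
  have ha_central : centroid F a = ⊥ := eq_bot_iff.2 fun f hf ↦ by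
    obtain ⟨c, rfl⟩ := hcentral f hf
    exact Algebra.mem_bot.2 ⟨c, Module.algebraMap_end_eq_smul_id F F a c⟩
  have hrange := range_lTensorMulLeft (A := A) (isPerfect_of_isSimple ⟨x, y, hxy⟩ hsimple₂)
    ha_central
  obtain ⟨ψ, hψ⟩ := (lTensorMulLeft F a A).exists_algEquiv_of_map_range_eq
    lTensorMulLeft_injective (φ.conjAlgEquiv F) (by rw [hrange, map_centroid_conjAlgEquiv hφ])
  have hφγ : ∀ q w, φ (lTensorMulLeft F a A q w) = lTensorMulLeft F a A (ψ q) (φ w) :=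
    fun q w ↦ by simp [hψ, LinearEquiv.conjAlgEquiv_apply]
  refine ⟨ψ, (LinearEquiv.lTensor a ψ.toLinearEquiv).symm.trans φ, fun u v ↦ ?_, fun p u ↦ ?_, ?_⟩
  · show φ (LinearMap.lTensor a (ψ.symm : A →ₐ[F] A).toLinearMap (u * v)) = _
    rw [lTensor_algHom_mul, hφ]
    rfl
  · show φ (LinearMap.lTensor a (ψ.symm : A →ₐ[F] A).toLinearMap (lTensorMulLeft F a A p u)) =
      lTensorMulLeft F a A p (φ (LinearMap.lTensor a (ψ.symm : A →ₐ[F] A).toLinearMap u))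
    rw [← LinearMap.comp_apply, lTensor_comp_lTensorMulLeft, LinearMap.comp_apply, hφγ,
      AlgEquiv.coe_toAlgHom, AlgEquiv.apply_symm_apply]
  · ext u
    simp only [LinearEquiv.trans_apply, LinearEquiv.symm_apply_apply]

/-- Let `a` be a finite-dimensional central simple `F`-algebra (not
necessarily associative or unital) and `A` a unital commutative associative `F`-algebra.
Then every `F`-algebra automorphism `φ` of `a ⊗ A` is the composition of the automorphism
induced on the second tensor factor by an `F`-algebra automorphism `ψ` of `A` with an
`A`-algebra automorphism `χ` of `a ⊗ A` (i.e. a multiplicative `F`-linear automorphism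
commuting with the `A`-action `γ_p : x ⊗ q ↦ x ⊗ pq`). -/
theorem aut_tensor_splits
    (F a A : Type*) [Field F]
    [NonUnitalNonAssocRing a] [Module F a] [SMulCommClass F a a] [IsScalarTower F a a]
    [FiniteDimensional F a]
    -- `a` is simple: nontrivial multiplication and no proper nonzero two-sided ideals
    (hsimple₁ : ∃ x y : a, x * y ≠ 0)
    (hsimple₂ : ∀ I : Submodule F a,
      (∀ x ∈ I, ∀ y : a, x * y ∈ I ∧ y * x ∈ I) → I = ⊥ ∨ I = ⊤)
    -- `a` is central: its centroid consists of scalar multiples of the identity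
    (hcentral : ∀ f : Module.End F a,
      (∀ x y : a, f (x * y) = f x * y ∧ f (x * y) = x * f y) →
      ∃ c : F, f = c • (LinearMap.id : a →ₗ[F] a))
    [CommRing A] [Algebra F A]
    (φ : a ⊗[F] A ≃ₗ[F] a ⊗[F] A)
    (hφ : ∀ u v : a ⊗[F] A, φ (u * v) = φ u * φ v) :
    ∃ ψ : A ≃ₐ[F] A, ∃ χ : a ⊗[F] A ≃ₗ[F] a ⊗[F] A,
      (∀ u v : a ⊗[F] A, χ (u * v) = χ u * χ v) ∧
      (∀ (p : A) (u : a ⊗[F] A),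
        χ (LinearMap.lTensor a (LinearMap.mulLeft F p) u)
          = LinearMap.lTensor a (LinearMap.mulLeft F p) (χ u)) ∧
      φ = (LinearEquiv.lTensor a ψ.toLinearEquiv).trans χ :=
  aut_tensor_splits_general F a A hsimple₁ hsimple₂ hcentral φ hφ
end

section
/- Every F-linear automorphism of the formal power series ring F[[x]] is given by substitution x ↦ a₁x + a₂x² + ⋯ for some coefficients aᵢ ∈ F with a₁ ≠ 0. In particular, every F-algebra automorphism of F[[x]] is continuous for the (x)-adic topology. -/
open PowerSeries

/-! An automorphism `φ` of `F⟦X⟧` preserves the non-units, which are the series with zero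
constant term; so `φ X` has zero constant term, and `φ` maps `X ^ n F⟦X⟧` into itself.
Writing `f = X ^ (n + 1) g + trunc (n + 1) f` then shows that the `n`-th coefficient of `φ f`
is that of `φ (trunc (n + 1) f) = (trunc (n + 1) f)(φ X)`. Finally `X = φ X * φ g` where
`φ⁻¹ X = X g`, which forces `φ g` to be a unit and hence the linear coefficient of `φ X`
to be nonzero. -/

/-- Formal composition `f(ψ)` of power series, defined coefficientwise (this is the usual
substitution when `ψ` has zero constant term): the `n`-th coefficient of `f(ψ)` only
depends on the truncation of `f` at order `n + 1`. -/
noncomputable def PowerSeries.compose {F : Type*} [CommRing F]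
    (f ψ : PowerSeries F) : PowerSeries F :=
  PowerSeries.mk fun n => PowerSeries.coeff n (Polynomial.aeval ψ (f.trunc (n + 1)))

namespace PowerSeries

theorem constantCoeff_map_X_eq_zero {F E : Type*} [Field F] [EquivLike E F⟦X⟧ F⟦X⟧]
    [MulEquivClass E F⟦X⟧ F⟦X⟧] (φ : E) : constantCoeff (φ X) = 0 := by
  by_contra h
  have hX : IsUnit (X : F⟦X⟧) :=
    (isUnit_map_iff φ X).mp (isUnit_iff_constantCoeff.mpr (isUnit_iff_ne_zero.mpr h))
  simp [isUnit_iff_constantCoeff] at hX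

theorem X_pow_dvd_map_of_X_pow_dvd {R G : Type*} [CommSemiring R] [FunLike G R⟦X⟧ R⟦X⟧]
    [MonoidHomClass G R⟦X⟧ R⟦X⟧] (φ : G) (hφ : X ∣ φ X) {n : ℕ} {f : R⟦X⟧}
    (hf : X ^ n ∣ f) : X ^ n ∣ φ f := by
  obtain ⟨g, rfl⟩ := hf
  rw [map_mul, map_pow]
  exact (pow_dvd_pow_of_dvd hφ n).mul_right _

theorem coeff_one_ne_zero_of_mul_eq_X {R : Type*} [CommSemiring R] [Nontrivial R] {a b : R⟦X⟧}
    (ha : constantCoeff a = 0) (hab : a * b = X) : coeff 1 a ≠ 0 := by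
  obtain ⟨c, rfl⟩ := X_dvd_iff.mpr ha
  have hcb : c * b = 1 := by
    rw [mul_assoc] at hab
    exact X_mul_cancel (hab.trans (mul_one X).symm)
  rw [coeff_succ_X_mul, coeff_zero_eq_constantCoeff_apply]
  exact ((IsUnit.of_mul_eq_one b hcb).map constantCoeff).ne_zero

theorem coeff_one_map_X_ne_zero {F : Type*} [Field F] (φ : F⟦X⟧ ≃* F⟦X⟧) :
    coeff 1 (φ X) ≠ 0 := by
  obtain ⟨g, hg⟩ := X_dvd_iff.mpr (constantCoeff_map_X_eq_zero φ.symm)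
  refine coeff_one_ne_zero_of_mul_eq_X (constantCoeff_map_X_eq_zero φ) (b := φ g) ?_
  rw [← map_mul, ← hg, MulEquiv.apply_symm_apply]

theorem algHom_apply_coe {R A : Type*} [CommSemiring R] [Semiring A] [Algebra R A]
    (φ : R⟦X⟧ →ₐ[R] A) (p : Polynomial R) : φ p = Polynomial.aeval (φ X) p := by
  rw [Polynomial.aeval_algHom_apply, ← Polynomial.eval₂_C_X_eq_coe]
  rfl

theorem algHom_apply_eq_compose {R : Type*} [CommRing R] (φ : R⟦X⟧ →ₐ[R] R⟦X⟧)
    (hφ : constantCoeff (φ X) = 0) (f : R⟦X⟧) : φ f = f.compose (φ X) := by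
  ext n
  rw [compose, coeff_mk, ← algHom_apply_coe]
  obtain ⟨g, hg⟩ : X ^ (n + 1) ∣ φ (X ^ (n + 1) * mk fun i ↦ coeff (i + (n + 1)) f) :=
    X_pow_dvd_map_of_X_pow_dvd φ (X_dvd_iff.mpr hφ) (dvd_mul_right _ _)
  conv_lhs => rw [eq_X_pow_mul_shift_add_trunc (n + 1) f, map_add, map_add, hg,
    coeff_X_pow_mul', if_neg (by omega), zero_add]

end PowerSeries

/-- Every `F`-algebra automorphism `φ` of `F[[x]]` is given by substitution
`x ↦ a₁x + a₂x² + ⋯` with `a₁ ≠ 0`: the series `φ(X)` has zero constant term and nonzero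
linear coefficient, and `φ(f) = f(φ(X))` for all `f`.  In particular `φ` is continuous for
the `(x)`-adic topology: for every `n` there is an `m` with `φ(X^m F[[x]]) ⊆ X^n F[[x]]`. -/
theorem powerSeries_algebra_aut_is_substitution
    (F : Type*) [Field F] (φ : PowerSeries F ≃ₐ[F] PowerSeries F) :
    PowerSeries.constantCoeff (φ (PowerSeries.X)) = 0 ∧
    PowerSeries.coeff 1 (φ (PowerSeries.X)) ≠ 0 ∧
    (∀ f : PowerSeries F, φ f = PowerSeries.compose f (φ (PowerSeries.X))) ∧
    (∀ n : ℕ, ∃ m : ℕ, ∀ f : PowerSeries F,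
      (PowerSeries.X : PowerSeries F) ^ m ∣ f → (PowerSeries.X : PowerSeries F) ^ n ∣ φ f) := by
  have h0 : constantCoeff (φ X) = 0 := constantCoeff_map_X_eq_zero φ
  exact ⟨h0, coeff_one_map_X_ne_zero φ.toMulEquiv, algHom_apply_eq_compose φ.toAlgHom h0,
    fun n => ⟨n, fun _ => X_pow_dvd_map_of_X_pow_dvd φ (X_dvd_iff.mpr h0)⟩⟩
end

section
/- Let F be a field of characteristic 0 and s ∈ F[[y]] a power series with s(0) ≠ 0 (order 0). Then the differential equation ψ'(y) = s(ψ(y)) has a solution ψ ∈ F[[y]] with ψ(0) = 0 and ψ'(0) ≠ 0 (i.e. ψ ∈ yF[[y]] with invertible linear coefficient). -/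
open PowerSeries

/-!
Comparing coefficients of `y^n` in `ψ' = s(ψ)` gives `(n + 1) ψ_{n+1} = [y^n] s(ψ)`, and the
right-hand side only involves `ψ_0, …, ψ_n`. So the equation, together with `ψ_0 = 0`, determines
the coefficients of `ψ` recursively (dividing by `n + 1` needs characteristic `0`), and the case
`n = 0` reads `ψ_1 = s(0) ≠ 0`.
-/

namespace PowerSeries

section CommSemiring

variable {R : Type*} [CommSemiring R] {n : ℕ} {ψ₁ ψ₂ : R⟦X⟧}

theorem trunc_pow_eq_of_trunc_eq (h : trunc n ψ₁ = trunc n ψ₂) (k : ℕ) :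
    trunc n (ψ₁ ^ k) = trunc n (ψ₂ ^ k) := by
  rw [← trunc_trunc_pow, h, trunc_trunc_pow]

theorem coeff_aeval_eq_of_trunc_eq (h : trunc (n + 1) ψ₁ = trunc (n + 1) ψ₂) (p : Polynomial R) :
    coeff n (Polynomial.aeval ψ₁ p) = coeff n (Polynomial.aeval ψ₂ p) := by
  simp only [Polynomial.aeval_eq_sum_range, map_sum, coeff_smul]
  refine Finset.sum_congr rfl fun k _ => ?_
  rw [← coeff_coe_trunc_of_lt n.lt_succ_self, trunc_pow_eq_of_trunc_eq h,
    coeff_coe_trunc_of_lt n.lt_succ_self]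

end CommSemiring

section CommRing

variable {R : Type*} [CommRing R] {n : ℕ} {ψ₁ ψ₂ : R⟦X⟧}

theorem coeff_compose_eq_of_trunc_eq (f : R⟦X⟧) (h : trunc (n + 1) ψ₁ = trunc (n + 1) ψ₂) :
    coeff n (compose f ψ₁) = coeff n (compose f ψ₂) := by
  simp only [compose, coeff_mk, coeff_aeval_eq_of_trunc_eq h]

theorem coeff_zero_compose (f ψ : R⟦X⟧) : coeff 0 (compose f ψ) = constantCoeff f := by
  simp [compose, Polynomial.aeval_def, eval₂_trunc_eq_sum_range]

end CommRing

section Solution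

variable {F : Type*} [Field F]

noncomputable def odeSolutionCoeff (s : F⟦X⟧) : ℕ → F
  | 0 => 0
  | n + 1 =>
      coeff n (compose s (mk fun k => if _ : k ≤ n then odeSolutionCoeff s k else 0)) / (n + 1)

noncomputable def odeSolution (s : F⟦X⟧) : F⟦X⟧ :=
  mk (odeSolutionCoeff s)

variable (s : F⟦X⟧)

@[simp]
theorem constantCoeff_odeSolution : constantCoeff (odeSolution s) = 0 := by
  rw [← coeff_zero_eq_constantCoeff_apply, odeSolution, coeff_mk, odeSolutionCoeff]

theorem coeff_compose_odeSolution [CharZero F] (n : ℕ) :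
    coeff n (compose s (odeSolution s)) = (n + 1) * coeff (n + 1) (odeSolution s) := by
  have htrunc : trunc (n + 1) (odeSolution s) =
      trunc (n + 1) (mk fun k => if _ : k ≤ n then odeSolutionCoeff s k else 0) := by
    ext k
    simp +contextual [coeff_trunc, odeSolution]
  rw [coeff_compose_eq_of_trunc_eq s htrunc, odeSolution, coeff_mk, odeSolutionCoeff,
    mul_div_cancel₀ _ (Nat.cast_add_one_ne_zero n)]

theorem coeff_one_odeSolution [CharZero F] : coeff 1 (odeSolution s) = constantCoeff s := by
  simpa [coeff_zero_compose] using (coeff_compose_odeSolution s 0).symm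

theorem derivative_odeSolution [CharZero F] :
    derivative F (odeSolution s) = compose s (odeSolution s) := by
  ext n
  rw [coeff_derivative, coeff_compose_odeSolution, mul_comm]

end Solution

end PowerSeries

/-- Let `F` be a field of characteristic `0` and `s ∈ F[[y]]` with
`s(0) ≠ 0`.  Then the formal differential equation `ψ'(y) = s(ψ(y))` has a solution
`ψ ∈ yF[[y]]` with `ψ'(0) ≠ 0`, i.e. with zero constant term and invertible linear
coefficient. -/
theorem formal_ode_order_zero_solvable
    (F : Type*) [Field F] [CharZero F] (s : PowerSeries F)
    (hs : PowerSeries.constantCoeff s ≠ 0) :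
    ∃ ψ : PowerSeries F,
      PowerSeries.constantCoeff ψ = 0 ∧
      PowerSeries.coeff 1 ψ ≠ 0 ∧
      ψ.derivativeFun = PowerSeries.compose s ψ := by
  refine ⟨odeSolution s, constantCoeff_odeSolution s, ?_, derivative_odeSolution s⟩
  rwa [coeff_one_odeSolution]
end

section
/- Let F be a field, n ≥ 1, and α = (αᵢ)_{i ≤ n−2} a sequence in F. Define A(n,α) = F((x)) ⊕ F[x]/(xⁿ) with componentwise multiplication and linear functional t given by t(x^{n−1}) = 1, t(xⁱ) = αᵢ for i ≤ n−2, t([x]^{n−1}) = −1, t([x]ⁱ) = −αᵢ for 0 ≤ i ≤ n−2, and t(xᵏ) = 0 for k ≥ n. Embed F[[x]] diagonally by f ↦ (f, [f]). Then the bilinear form (f,g) ↦ t(fg) on A(n,α) is non-degenerate, and the orthogonal complement of the image of F[[x]] with respect to this form equals the image of F[[x]] itself (i.e. the diagonal copy of F[[x]] is Lagrangian-like: F[[x]]^{⊥_t} = F[[x]]). -/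
noncomputable section

variable {F : Type*} [Field F]

/-- The trace functional on the Laurent-series component of `A(n,α)`:
`t₁(f) = Σᵢ αᵢ fᵢ`, where `α : ℤ → F` encodes the sequence `(αᵢ)_{i ≤ n-2}` together with
the normalizations `α_{n-1} = 1` and `α_k = 0` for `k ≥ n`. -/
noncomputable def traceLaurent (α : ℤ → F) (f : LaurentSeries F) : F :=
  ∑ᶠ i : ℤ, α i * f.coeff i

/-- The trace functional on the truncated component `F[x]/(xⁿ)` of `A(n,α)`, computed on a
polynomial representative: `t₂(g) = Σ_{0 ≤ i < n} αᵢ gᵢ` (it only depends on `g mod xⁿ`). -/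
noncomputable def traceTrunc (n : ℕ) (α : ℤ → F) (g : Polynomial F) : F :=
  ∑ i ∈ Finset.range n, α (i : ℤ) * g.coeff i

/-- The trace form `B(a, b) = t(ab)` of `A(n,α) = F((x)) ⊕ F[x]/(xⁿ)`, where
`t(f, [g]) = t₁(f) - t₂(g)`, computed on representatives. -/
noncomputable def traceForm (n : ℕ) (α : ℤ → F)
    (u v : LaurentSeries F × Polynomial F) : F :=
  traceLaurent α (u.1 * v.1) - traceTrunc n α (u.2 * v.2)

/-! On `F((x))` the pairing with `x^(n-1-ord f)` picks out the leading coefficient of `f`, since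
`t` is `1` in degree `n-1` and vanishes above it; on `F[x]/(xⁿ)` the pairing with
`x^(n-1-d)`, `d` the trailing degree, picks out the trailing coefficient in the same way. This
gives non-degeneracy. The diagonal is isotropic because `t₁` only sees the first `n`
coefficients of a power series, and those of a product are computed by the truncations.
Conversely, pairing with the diagonal monomials `xᵏ`, `k ≥ n`, whose truncations vanish, forces
`ord f ≥ 0`; subtracting the diagonal element of `f` then leaves a pairing on `F[x]/(xⁿ)` alone,
where non-degeneracy applies. -/

open Polynomial HahnSeries

section

variable {n : ℕ} {α : ℤ → F}

theorem PowerSeries.trunc_X_pow_of_lt {R : Type*} [Semiring R] {m : ℕ} (hm : m < n) :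
    PowerSeries.trunc n (PowerSeries.X ^ m : PowerSeries R) = Polynomial.X ^ m := by
  ext i
  rw [PowerSeries.coeff_trunc, PowerSeries.coeff_X_pow, Polynomial.coeff_X_pow]
  split_ifs <;> first | rfl | omega

theorem LaurentSeries.exists_ofPowerSeries_eq_of_order_nonneg {R : Type*} [Semiring R]
    {f : LaurentSeries R} (hf : 0 ≤ f.order) : ∃ h : PowerSeries R, ofPowerSeries ℤ R h = f :=
  ⟨PowerSeries.X ^ f.order.toNat * f.powerSeriesPart,
    LaurentSeries.X_order_mul_powerSeriesPart (Int.toNat_of_nonneg hf)⟩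

theorem traceTrunc_sub (p q : F[X]) :
    traceTrunc n α (p - q) = traceTrunc n α p - traceTrunc n α q := by
  simp only [traceTrunc, Polynomial.coeff_sub, mul_sub, Finset.sum_sub_distrib]

theorem traceTrunc_eq_zero_of_X_pow_dvd {p : F[X]} (hp : X ^ n ∣ p) : traceTrunc n α p = 0 :=
  Finset.sum_eq_zero fun i hi => by
    rw [X_pow_dvd_iff.mp hp i (Finset.mem_range.mp hi), mul_zero]

theorem traceTrunc_mul_X_pow_eq_trailingCoeff (hnorm : α ((n : ℤ) - 1) = 1) {p : F[X]}
    (hp : p.natTrailingDegree < n) :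
    traceTrunc n α (p * X ^ (n - 1 - p.natTrailingDegree)) = p.trailingCoeff := by
  rw [traceTrunc, Finset.sum_eq_single (n - 1)]
  · rw [coeff_mul_X_pow', if_pos (by omega), Nat.sub_sub_self (by omega),
      Nat.cast_pred (by omega), hnorm, one_mul, trailingCoeff]
  · intro i hi_mem hi
    have := Finset.mem_range.mp hi_mem
    rw [coeff_mul_X_pow']
    split_ifs with hle
    · rw [coeff_eq_zero_of_lt_natTrailingDegree (by omega), mul_zero]
    · rw [mul_zero]
  · intro h
    exact absurd (Finset.mem_range.mpr (by omega)) h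

theorem X_pow_dvd_iff_forall_traceTrunc_mul_X_pow_eq_zero (hnorm : α ((n : ℤ) - 1) = 1)
    {p : F[X]} : X ^ n ∣ p ↔ ∀ m < n, traceTrunc n α (p * X ^ m) = 0 := by
  refine ⟨fun hp m _ => traceTrunc_eq_zero_of_X_pow_dvd (dvd_mul_of_dvd_left hp _),
    fun H => ?_⟩
  by_contra hp
  have hd : p.natTrailingDegree < n := by
    by_contra! hle
    exact hp (X_pow_dvd_iff.mpr fun d hd => coeff_eq_zero_of_lt_natTrailingDegree (by omega))
  have hp0 : p ≠ 0 := by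
    rintro rfl
    exact hp (dvd_zero _)
  exact trailingCoeff_nonzero_iff_nonzero.mpr hp0 <|
    (traceTrunc_mul_X_pow_eq_trailingCoeff hnorm hd).symm.trans (H _ (by omega))

theorem traceLaurent_mul_single_eq_leadingCoeff (hnorm : α ((n : ℤ) - 1) = 1)
    (htop : ∀ k : ℤ, (n : ℤ) ≤ k → α k = 0) (f : LaurentSeries F) :
    traceLaurent α (f * single ((n : ℤ) - 1 - f.order) 1) = f.leadingCoeff := by
  rw [traceLaurent, finsum_eq_single _ ((n : ℤ) - 1)]
  · rw [coeff_mul_single, sub_sub_cancel, hnorm, one_mul, mul_one, leadingCoeff_eq]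
  · intro i hi
    rw [coeff_mul_single]
    rcases hi.lt_or_gt with h | h
    · rw [coeff_eq_zero_of_lt_order (by omega), zero_mul, mul_zero]
    · rw [htop i (by omega), zero_mul]

theorem traceLaurent_ofPowerSeries (htop : ∀ k : ℤ, (n : ℤ) ≤ k → α k = 0)
    (h : PowerSeries F) :
    traceLaurent α (ofPowerSeries ℤ F h) = traceTrunc n α (h.trunc n) := by
  rw [traceLaurent, finsum_eq_sum_of_support_subset _ (s := (Finset.range n).map Nat.castEmbedding)]
  · rw [Finset.sum_map, traceTrunc]
    refine Finset.sum_congr rfl fun i hi => ?_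
    rw [Nat.castEmbedding_apply, LaurentSeries.coeff_coe_powerSeries, PowerSeries.coeff_trunc,
      if_pos (Finset.mem_range.mp hi)]
  · intro i hi
    have hi0 : 0 ≤ i := by
      by_contra! hneg
      rw [Function.mem_support, PowerSeries.coeff_coe, if_pos hneg, mul_zero] at hi
      exact hi rfl
    have hin : i < n := by
      by_contra! hge
      rw [Function.mem_support, htop i hge, zero_mul] at hi
      exact hi rfl
    simp only [Finset.coe_map, Set.mem_image, Finset.mem_coe, Finset.mem_range,
      Nat.castEmbedding_apply]
    exact ⟨i.toNat, by omega, by omega⟩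

theorem traceForm_ofPowerSeries_trunc_eq_zero (htop : ∀ k : ℤ, (n : ℤ) ≤ k → α k = 0)
    (a b : PowerSeries F) :
    traceForm n α (ofPowerSeries ℤ F a, a.trunc n) (ofPowerSeries ℤ F b, b.trunc n) = 0 := by
  rw [traceForm, ← map_mul, traceLaurent_ofPowerSeries htop, sub_eq_zero, traceTrunc, traceTrunc]
  refine Finset.sum_congr rfl fun i hi => ?_
  have hi : i < n := Finset.mem_range.mp hi
  rw [PowerSeries.coeff_trunc, if_pos hi, PowerSeries.coeff_mul_eq_coeff_trunc_mul_trunc _ _ hi,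
    ← Polynomial.coe_mul, Polynomial.coeff_coe]

theorem eq_zero_and_X_pow_dvd_of_forall_traceForm_eq_zero (hnorm : α ((n : ℤ) - 1) = 1)
    (htop : ∀ k : ℤ, (n : ℤ) ≤ k → α k = 0) {f : LaurentSeries F} {g : F[X]}
    (H : ∀ f' g', traceForm n α (f, g) (f', g') = 0) : f = 0 ∧ X ^ n ∣ g := by
  refine ⟨HahnSeries.leadingCoeff_eq_zero.mp ?_,
    (X_pow_dvd_iff_forall_traceTrunc_mul_X_pow_eq_zero hnorm).mpr fun m _ => ?_⟩
  · have := H (single ((n : ℤ) - 1 - f.order) 1) 0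
    rwa [traceForm, mul_zero, traceTrunc_eq_zero_of_X_pow_dvd (dvd_zero _), sub_zero,
      traceLaurent_mul_single_eq_leadingCoeff hnorm htop] at this
  · have := H 0 (X ^ m)
    simpa [traceForm, traceLaurent] using this

theorem order_nonneg_of_forall_traceForm_ofPowerSeries_eq_zero (hnorm : α ((n : ℤ) - 1) = 1)
    (htop : ∀ k : ℤ, (n : ℤ) ≤ k → α k = 0) {f : LaurentSeries F} {g : F[X]}
    (H : ∀ h : PowerSeries F, traceForm n α (f, g) (ofPowerSeries ℤ F h, h.trunc n) = 0) :
    0 ≤ f.order := by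
  by_contra! hf
  obtain ⟨k, hk⟩ : ∃ k : ℕ, ((n + k : ℕ) : ℤ) = n - 1 - f.order :=
    ⟨(-1 - f.order).toNat, by omega⟩
  have := H (PowerSeries.X ^ (n + k))
  simp only [traceForm] at this
  rw [ofPowerSeries_X_pow, hk, _root_.pow_add, PowerSeries.trunc_X_pow_self_mul, mul_zero,
    traceTrunc_eq_zero_of_X_pow_dvd (dvd_zero _), sub_zero,
    traceLaurent_mul_single_eq_leadingCoeff hnorm htop, HahnSeries.leadingCoeff_eq_zero] at this
  simp [this] at hf

theorem traceForm_ofPowerSeries_left (htop : ∀ k : ℤ, (n : ℤ) ≤ k → α k = 0)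
    (a : PowerSeries F) (g : F[X]) (b : PowerSeries F) :
    traceForm n α (ofPowerSeries ℤ F a, g) (ofPowerSeries ℤ F b, b.trunc n) =
      traceTrunc n α ((a.trunc n - g) * b.trunc n) := by
  have hiso := traceForm_ofPowerSeries_trunc_eq_zero htop a b
  rw [traceForm] at hiso ⊢
  rw [sub_mul, traceTrunc_sub]
  linear_combination hiso

theorem forall_traceForm_ofPowerSeries_eq_zero_iff (hnorm : α ((n : ℤ) - 1) = 1)
    (htop : ∀ k : ℤ, (n : ℤ) ≤ k → α k = 0) (a : PowerSeries F) (g : F[X]) :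
    (∀ h : PowerSeries F,
      traceForm n α (ofPowerSeries ℤ F a, g) (ofPowerSeries ℤ F h, h.trunc n) = 0) ↔
      X ^ n ∣ g - a.trunc n := by
  simp_rw [traceForm_ofPowerSeries_left htop]
  rw [dvd_sub_comm]
  constructor
  · intro H
    refine (X_pow_dvd_iff_forall_traceTrunc_mul_X_pow_eq_zero hnorm).mpr fun m hm => ?_
    rw [← PowerSeries.trunc_X_pow_of_lt hm]
    exact H _
  · exact fun hdvd h => traceTrunc_eq_zero_of_X_pow_dvd (dvd_mul_of_dvd_left hdvd _)

end

theorem traceExtension_nondegenerate_and_diagonal_lagrangian_general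
    (n : ℕ) (α : ℤ → F)
    (hnorm : α ((n : ℤ) - 1) = 1)
    (htop : ∀ k : ℤ, (n : ℤ) ≤ k → α k = 0) :
    -- (1) non-degeneracy of the trace form on `F((x)) ⊕ F[x]/(xⁿ)`
    (∀ (f : LaurentSeries F) (g : Polynomial F),
      (∀ (f' : LaurentSeries F) (g' : Polynomial F),
        traceForm n α (f, g) (f', g') = 0) →
      f = 0 ∧ (Polynomial.X : Polynomial F) ^ n ∣ g) ∧
    -- (2) the diagonal copy of `F[[x]]` coincides with its own orthogonal complement
    (∀ (f : LaurentSeries F) (g : Polynomial F),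
      (∀ h : PowerSeries F,
        traceForm n α (f, g) (HahnSeries.ofPowerSeries ℤ F h, h.trunc n) = 0) ↔
      ∃ h : PowerSeries F,
        f = HahnSeries.ofPowerSeries ℤ F h ∧
        (Polynomial.X : Polynomial F) ^ n ∣ (g - h.trunc n)) := by
  refine ⟨fun f g => eq_zero_and_X_pow_dvd_of_forall_traceForm_eq_zero hnorm htop,
    fun f g => ⟨fun H => ?_, ?_⟩⟩
  · obtain ⟨h, rfl⟩ := LaurentSeries.exists_ofPowerSeries_eq_of_order_nonneg
      (order_nonneg_of_forall_traceForm_ofPowerSeries_eq_zero hnorm htop H)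
    exact ⟨h, rfl, (forall_traceForm_ofPowerSeries_eq_zero_iff hnorm htop h g).mp H⟩
  · rintro ⟨h, rfl, hdvd⟩
    exact (forall_traceForm_ofPowerSeries_eq_zero_iff hnorm htop h g).mpr hdvd

/-- Let `n ≥ 1` and `α = (αᵢ)_{i ≤ n-2}` a sequence in `F`, extended by
`α_{n-1} = 1` and `α_k = 0` for `k ≥ n`.  On `A(n,α) = F((x)) ⊕ F[x]/(xⁿ)` (elements of the
second factor represented by polynomials, modulo `xⁿ`), the trace form `(u,v) ↦ t(uv)` is
non-degenerate, and the orthogonal complement of the diagonally embedded `F[[x]]`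
(`h ↦ (h, h mod xⁿ)`) equals the diagonal `F[[x]]` itself. -/
theorem traceExtension_nondegenerate_and_diagonal_lagrangian
    (n : ℕ) (hn : 1 ≤ n) (α : ℤ → F)
    (hnorm : α ((n : ℤ) - 1) = 1)
    (htop : ∀ k : ℤ, (n : ℤ) ≤ k → α k = 0) :
    -- (1) non-degeneracy of the trace form on `F((x)) ⊕ F[x]/(xⁿ)`
    (∀ (f : LaurentSeries F) (g : Polynomial F),
      (∀ (f' : LaurentSeries F) (g' : Polynomial F),
        traceForm n α (f, g) (f', g') = 0) →
      f = 0 ∧ (Polynomial.X : Polynomial F) ^ n ∣ g) ∧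
    -- (2) the diagonal copy of `F[[x]]` coincides with its own orthogonal complement
    (∀ (f : LaurentSeries F) (g : Polynomial F),
      (∀ h : PowerSeries F,
        traceForm n α (f, g) (HahnSeries.ofPowerSeries ℤ F h, h.trunc n) = 0) ↔
      ∃ h : PowerSeries F,
        f = HahnSeries.ofPowerSeries ℤ F h ∧
        (Polynomial.X : Polynomial F) ^ n ∣ (g - h.trunc n)) :=
  traceExtension_nondegenerate_and_diagonal_lagrangian_general n α hnorm htop
end
end

section
/- Let F be a field of characteristic 0, n ≥ 3, and let t: A(n,α) → F be the trace functional of the trace extension A(n,α) = F((x)) ⊕ F[x]/(xⁿ) determined by a sequence α = (αᵢ)_{i≤n−2} with α_{n−1} := 1 and t(xᵏ) = 0 for k ≥ n. Then there exists a power series u = x(1 + u₁x + u₂x² + ⋯) ∈ F[[x]] such that t(uᵏ) = 0 for all integers k ∉ {0, n−1}, where negative powers uᵏ are computed in F((x)). -/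
/-!
Write `u = x V` with `V ∈ F⟦X⟧` and `V(0) = 1`, and put `N = n - 1`. Since `α` vanishes above
`N`, `t(uᵏ)` only sees the coefficients of `Vᵏ` in degrees `0, …, N - k`, the top one with weight
`α_N = 1`. In `F⟦X⟧ ⧸ (X^{m+1})` with `m ≥ 1` the class `ε` of `Xᵐ` squares to zero, so
`(1 + cε)ᵏ = 1 + kcε` for every `k ∈ ℤ`: changing the `m`-th coefficient of `V` by `c` leaves the
lower coefficients of `Vᵏ` alone and changes its `m`-th coefficient by `kc`. Thus for
`k = N - m ≠ 0` the value `t(uᵏ)` moves by exactly `kc` and does not depend on the coefficients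
of `V` beyond `m`, so the coefficients of `V` can be chosen one after the other, the `m`-th one
killing `t(u^{N-m})`. For `k > N` there is nothing to do.
-/

open PowerSeries

theorem Units.val_zpow_mul_eq_of_val_mul_eq {R : Type*} [Monoid R] {u : Rˣ} {e : R}
    (h : (u : R) * e = e) (k : ℤ) : ((u ^ k : Rˣ) : R) * e = e :=
  (MulAction.stabilizer Rˣ e).zpow_mem (MulAction.mem_stabilizer_iff.mpr h) k

section SquareZero

variable {R : Type*} [CommRing R] {e : R}

theorem Units.val_zpow_of_val_eq_one_add (he : e * e = 0) {w : Rˣ} (hw : (w : R) = 1 + e)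
    (k : ℤ) : ((w ^ k : Rˣ) : R) = 1 + k * e := by
  have hinv : ((w⁻¹ : Rˣ) : R) = 1 - e :=
    Units.inv_eq_of_mul_eq_one_right (by rw [hw]; linear_combination -he)
  induction k using Int.induction_on with
  | zero => simp
  | succ k ih =>
    rw [zpow_add_one, Units.val_mul, ih, hw]; push_cast; linear_combination (k : R) * he
  | pred k ih =>
    rw [zpow_sub_one, Units.val_mul, ih, hinv]; push_cast; linear_combination (k : R) * he

theorem Units.val_zpow_of_val_eq_add (he : e * e = 0) {u v : Rˣ} (hu : (u : R) * e = e)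
    (hv : (v : R) = u + e) (k : ℤ) : ((v ^ k : Rˣ) : R) = ((u ^ k : Rˣ) : R) + k * e := by
  have hw : ((u⁻¹ * v : Rˣ) : R) = 1 + e := by
    rw [Units.val_mul, hv, mul_add, Units.inv_mul, ← zpow_neg_one,
      Units.val_zpow_mul_eq_of_val_mul_eq hu]
  calc ((v ^ k : Rˣ) : R) = ((u ^ k * (u⁻¹ * v) ^ k : Rˣ) : R) := by
        rw [← mul_zpow, _root_.mul_inv_cancel_left]
    _ = ((u ^ k : Rˣ) : R) + k * e := by
      rw [Units.val_mul, Units.val_zpow_of_val_eq_one_add he hw, mul_add, mul_one,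
        mul_left_comm, Units.val_zpow_mul_eq_of_val_mul_eq hu]

end SquareZero

namespace PowerSeries

variable {R : Type*} [CommRing R]

theorem X_pow_succ_dvd_val_zpow_sub {m : ℕ} (hm : 1 ≤ m) {V W : R⟦X⟧ˣ}
    (hW : constantCoeff (W : R⟦X⟧) = 1) {c : R}
    (h : X ^ (m + 1) ∣ (V : R⟦X⟧) - (W : R⟦X⟧) - C c * X ^ m) (k : ℤ) :
    X ^ (m + 1) ∣ ((V ^ k : R⟦X⟧ˣ) : R⟦X⟧) - ((W ^ k : R⟦X⟧ˣ) : R⟦X⟧) - C (k * c) * X ^ m := by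
  set π := Ideal.Quotient.mk (Ideal.span {(X : R⟦X⟧) ^ (m + 1)})
  have hπ : ∀ f, X ^ (m + 1) ∣ f ↔ π f = 0 := fun f => by
    rw [Ideal.Quotient.eq_zero_iff_mem, Ideal.mem_span_singleton]
  set e := π (C c * X ^ m)
  have he : e * e = 0 := by
    rw [← map_mul, ← hπ]
    exact (pow_dvd_pow X (by omega : m + 1 ≤ m + m)).trans ⟨C c * C c, by ring⟩
  have hWe : π W * e = e := by
    obtain ⟨g, hg⟩ := X_dvd_iff.mpr (by rw [map_sub, hW, map_one, sub_self] :
      constantCoeff ((W : R⟦X⟧) - 1) = 0)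
    rw [← map_mul, ← sub_eq_zero, ← map_sub, ← hπ]
    exact ⟨g * C c, by linear_combination C c * X ^ m * hg⟩
  have hVe : π V = π W + e := by
    rwa [← sub_eq_iff_eq_add', ← sub_eq_zero, ← map_sub, ← map_sub, ← hπ]
  have hpow := Units.val_zpow_of_val_eq_add he (u := Units.map π.toMonoidHom W)
    (v := Units.map π.toMonoidHom V) hWe hVe k
  rw [← map_zpow, ← map_zpow, Units.coe_map, Units.coe_map, RingHom.toMonoidHom_eq_coe,
    MonoidHom.coe_coe] at hpow
  rw [hπ, map_sub, map_sub, hpow, map_mul C, map_intCast, mul_assoc, map_mul π, map_intCast]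
  ring

theorem X_pow_succ_dvd_sub_trunc (m : ℕ) (f : R⟦X⟧) :
    X ^ (m + 1) ∣ f - (trunc m f : R⟦X⟧) - C (coeff m f) * X ^ m := by
  refine X_pow_dvd_iff.mpr fun d hd => ?_
  rw [map_sub, map_sub, Polynomial.coeff_coe, coeff_trunc, coeff_C_mul_X_pow]
  split_ifs <;> first | omega | simp_all

theorem coeff_eq_of_X_pow_succ_dvd_sub {m : ℕ} {A B : R⟦X⟧} {a : R}
    (h : X ^ (m + 1) ∣ A - B - C a * X ^ m) {d : ℕ} (hd : d ≤ m) :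
    coeff d A = coeff d B + if d = m then a else 0 := by
  have hd := X_pow_dvd_iff.mp h d (by omega)
  rw [map_sub, map_sub, coeff_C_mul_X_pow] at hd
  linear_combination hd

end PowerSeries

namespace LaurentSeries

theorem finsum_mul_coeff_single_mul_coe {R : Type*} [Semiring R] {α : ℤ → R} {N : ℤ}
    (hα : ∀ i, N < i → α i = 0) (k : ℤ) (f : R⟦X⟧) :
    ∑ᶠ i, α i * (HahnSeries.single k 1 * (f : R⸨X⸩)).coeff i =
      ∑ i ∈ Finset.Icc k N, α i * coeff (i - k).toNat f := by
  have hcoeff : ∀ i, (HahnSeries.single k 1 * (f : R⸨X⸩)).coeff i =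
      if i - k < 0 then 0 else coeff (i - k).toNat f := fun i => by
    rw [HahnSeries.coeff_single_mul, one_mul, PowerSeries.coeff_coe]
    split_ifs
    · rfl
    · congr; omega
  rw [finsum_eq_sum_of_support_subset _ (s := Finset.Icc k N) fun i hi => ?_]
  · refine Finset.sum_congr rfl fun i hi => ?_
    rw [hcoeff, if_neg (by rw [Finset.mem_Icc] at hi; omega)]
  · rw [Function.mem_support] at hi
    rw [Finset.coe_Icc, Set.mem_Icc]
    constructor
    · by_contra hik
      exact hi (by rw [hcoeff, if_pos (by omega), mul_zero])
    · by_contra hiN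
      exact hi (by rw [hα i (by omega), zero_mul])

theorem coe_X_mul_zpow {F : Type*} [Field F] (V : F⟦X⟧ˣ) (k : ℤ) :
    ((X * (V : F⟦X⟧) : F⟦X⟧) : F⸨X⸩) ^ k =
      HahnSeries.single k (1 : F) * (((V ^ k : F⟦X⟧ˣ) : F⟦X⟧) : F⸨X⸩) := by
  rw [coe_mul, coe_X, mul_zpow, ← RatFunc.single_zpow]
  congr 1
  have hmap := congrArg Units.val
    (map_zpow (Units.map (HahnSeries.ofPowerSeries ℤ F).toMonoidHom) V k)
  rwa [Units.val_zpow_eq_zpow_val, Units.coe_map, Units.coe_map, eq_comm] at hmap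

end LaurentSeries

namespace TraceExtension

open scoped LaurentSeries
open LaurentSeries

variable {F : Type*} [Field F]

noncomputable def trace (α : ℤ → F) (f : F⸨X⸩) : F :=
  ∑ᶠ i, α i * f.coeff i

/-- At `m = N` the exponent `N - m` is `0` and the division by `0` makes this coefficient `0`;
any value would do there. -/
noncomputable def normalizingCoeff (α : ℤ → F) (N : ℤ) : ℕ → F
  | 0 => 1
  | m + 1 =>
    -trace α (((X * mk fun l => if _ : l < m + 1 then normalizingCoeff α N l else 0 : F⟦X⟧) :
      F⸨X⸩) ^ (N - (m + 1 : ℕ))) / ((N - (m + 1 : ℕ) : ℤ) : F)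

noncomputable def normalizingSeries (α : ℤ → F) (N : ℤ) : F⟦X⟧ :=
  mk (normalizingCoeff α N)

variable {α : ℤ → F} {N : ℤ}

theorem constantCoeff_normalizingSeries : constantCoeff (normalizingSeries α N) = 1 := by
  rw [normalizingSeries, ← coeff_zero_eq_constantCoeff_apply, coeff_mk, normalizingCoeff]

theorem constantCoeff_trunc_normalizingSeries {m : ℕ} (hm : 1 ≤ m) :
    constantCoeff (trunc m (normalizingSeries α N) : F⟦X⟧) = 1 := by
  rw [← coeff_zero_eq_constantCoeff_apply, coeff_coe_trunc_of_lt hm,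
    coeff_zero_eq_constantCoeff_apply, constantCoeff_normalizingSeries]

theorem coeff_normalizingSeries_of_pos {m : ℕ} (hm : 1 ≤ m) :
    coeff m (normalizingSeries α N) =
      -trace α (((X * (trunc m (normalizingSeries α N) : F⟦X⟧) : F⟦X⟧) : F⸨X⸩) ^ (N - m)) /
        ((N - m : ℤ) : F) := by
  obtain ⟨m, rfl⟩ : ∃ m', m = m' + 1 := ⟨m - 1, by omega⟩
  rw [normalizingSeries, coeff_mk, normalizingCoeff]
  congr
  ext l
  rw [coeff_trunc, coeff_mk, dite_eq_ite]

theorem trace_coe_X_mul_zpow_eq_zero_of_lt (hα : ∀ i, N < i → α i = 0) (V : F⟦X⟧ˣ) {k : ℤ}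
    (hNk : N < k) : trace α (((X * (V : F⟦X⟧) : F⟦X⟧) : F⸨X⸩) ^ k) = 0 := by
  rw [trace, coe_X_mul_zpow, finsum_mul_coeff_single_mul_coe hα,
    Finset.Icc_eq_empty_of_lt hNk, Finset.sum_empty]

theorem trace_coe_X_mul_zpow_eq_add (hα : ∀ i, N < i → α i = 0) {m : ℕ} (hm : 1 ≤ m)
    {V W : F⟦X⟧ˣ} (hW : constantCoeff (W : F⟦X⟧) = 1) {c : F}
    (h : X ^ (m + 1) ∣ (V : F⟦X⟧) - (W : F⟦X⟧) - C c * X ^ m) {k : ℤ} (hk : k + m = N) :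
    trace α (((X * (V : F⟦X⟧) : F⟦X⟧) : F⸨X⸩) ^ k) =
      trace α (((X * (W : F⟦X⟧) : F⟦X⟧) : F⸨X⸩) ^ k) + α N * (k * c) := by
  have hpow := X_pow_succ_dvd_val_zpow_sub hm hW h k
  rw [trace, trace, coe_X_mul_zpow, coe_X_mul_zpow, finsum_mul_coeff_single_mul_coe hα,
    finsum_mul_coeff_single_mul_coe hα, Finset.sum_congr rfl fun i hi => by
      rw [coeff_eq_of_X_pow_succ_dvd_sub hpow (by rw [Finset.mem_Icc] at hi; omega), mul_add],
    Finset.sum_add_distrib]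
  congr 1
  rw [Finset.sum_eq_single_of_mem N (by rw [Finset.mem_Icc]; omega), if_pos (by omega)]
  intro i _ hiN
  rw [if_neg (by omega), mul_zero]

theorem trace_coe_X_mul_normalizingSeries_zpow_eq_zero [CharZero F]
    (hα : ∀ i, N < i → α i = 0) (hN : α N = 1) {k : ℤ} (hk0 : k ≠ 0) (hkN : k ≠ N) :
    trace α (((X * normalizingSeries α N : F⟦X⟧) : F⸨X⸩) ^ k) = 0 := by
  set V := normalizingSeries α N
  have hV : IsUnit V := isUnit_iff_constantCoeff.mpr <| by
    rw [constantCoeff_normalizingSeries]; exact isUnit_one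
  rcases lt_or_gt_of_ne hkN with hkN | hNk
  · obtain ⟨m, hm⟩ : ∃ m : ℕ, k + m = N := ⟨(N - k).toNat, by omega⟩
    have hm1 : 1 ≤ m := by omega
    have hT : IsUnit (trunc m V : F⟦X⟧) := isUnit_iff_constantCoeff.mpr <| by
      rw [constantCoeff_trunc_normalizingSeries hm1]; exact isUnit_one
    have key := trace_coe_X_mul_zpow_eq_add hα hm1 (V := hV.unit) (W := hT.unit)
      (by rw [hT.unit_spec, constantCoeff_trunc_normalizingSeries hm1])
      (by rw [hV.unit_spec, hT.unit_spec]; exact X_pow_succ_dvd_sub_trunc m V) hm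
    rw [hV.unit_spec, hT.unit_spec, hN, one_mul, coeff_normalizingSeries_of_pos hm1,
      show N - m = k by omega] at key
    have hkF : (k : F) ≠ 0 := Int.cast_ne_zero.mpr hk0
    rw [key]
    field_simp
    ring
  · simpa only [hV.unit_spec] using trace_coe_X_mul_zpow_eq_zero_of_lt hα hV.unit hNk

end TraceExtension

open TraceExtension

theorem trace_extension_normalizing_series_exists_general
    (F : Type*) [Field F] [CharZero F]
    (n : ℕ) (α : ℤ → F)
    (hnorm : α ((n : ℤ) - 1) = 1)
    (htop : ∀ k : ℤ, (n : ℤ) ≤ k → α k = 0) :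
    ∃ u : LaurentSeries F,
      u.coeff 1 = 1 ∧
      (∀ i : ℤ, i ≤ 0 → u.coeff i = 0) ∧
      (∀ k : ℤ, k ≠ 0 → k ≠ (n : ℤ) - 1 →
        ∑ᶠ i : ℤ, α i * (u ^ k).coeff i = 0) := by
  have hα : ∀ i, (n : ℤ) - 1 < i → α i = 0 := fun i hi => htop i (by omega)
  refine ⟨((X * normalizingSeries α ((n : ℤ) - 1) : F⟦X⟧) : LaurentSeries F), ?_, fun i hi => ?_,
    fun k hk0 hkN => trace_coe_X_mul_normalizingSeries_zpow_eq_zero hα hnorm hk0 hkN⟩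
  · rw [PowerSeries.coeff_coe, if_neg (by omega), show (1 : ℤ).natAbs = 0 + 1 from rfl,
      coeff_succ_X_mul, coeff_zero_eq_constantCoeff_apply, constantCoeff_normalizingSeries]
  · rw [PowerSeries.coeff_coe]
    split_ifs
    · rfl
    · rw [show i.natAbs = 0 by omega, coeff_zero_X_mul]

/-- Let `F` be a field of characteristic `0`, `n ≥ 3`, and let
`t : A(n,α) → F` be the trace functional of the trace extension `A(n,α)` determined by a
sequence `α : ℤ → F` with `α_{n-1} = 1` and `α_k = 0` for `k ≥ n`; on the Laurent-series
component `t(f) = Σᵢ αᵢ fᵢ`.  Then there is a power series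
`u = x(1 + u₁x + u₂x² + ⋯) ∈ F[[x]]` such that `t(uᵏ) = 0` for all integers
`k ∉ {0, n-1}`, where negative powers are computed in `F((x))`. -/
theorem trace_extension_normalizing_series_exists
    (F : Type*) [Field F] [CharZero F]
    (n : ℕ) (hn : 3 ≤ n) (α : ℤ → F)
    (hnorm : α ((n : ℤ) - 1) = 1)
    (htop : ∀ k : ℤ, (n : ℤ) ≤ k → α k = 0) :
    ∃ u : LaurentSeries F,
      u.coeff 1 = 1 ∧
      (∀ i : ℤ, i ≤ 0 → u.coeff i = 0) ∧
      (∀ k : ℤ, k ≠ 0 → k ≠ (n : ℤ) - 1 →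
        ∑ᶠ i : ℤ, α i * (u ^ k).coeff i = 0) :=
  trace_extension_normalizing_series_exists_general F n α hnorm htop
end

section
/- Let F be a field and consider the F-algebra A(∞) = (⊕_{i≥0} F aᵢ) ⊕ F[[x]] with multiplication aᵢaⱼ = 0, aᵢ·xʲ = a_{i−j} if i ≥ j and 0 otherwise, together with the usual multiplication on F[[x]]. Define t: A(∞) → F by t(a₀) = 1, t(aᵢ) = 0 for i ≥ 1, and t(F[[x]]) = 0. Then: (1) A(∞) is a commutative associative unital F-algebra; (2) the bilinear form (u,v) ↦ t(uv) is non-degenerate on A(∞); (3) the orthogonal complement of F[[x]] with respect to this form equals F[[x]]. -/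
noncomputable section

variable {F : Type*} [Field F]

/-- The action of `F[[x]]` on the square-zero part `⊕_{i≥0} F aᵢ` of `A(∞)`, determined by
`aᵢ · xʲ = a_{i-j}` when `i ≥ j` and `aᵢ · xʲ = 0` otherwise:
`(a · g)_m = Σ_{i ≥ m} aᵢ g_{i-m}`. -/
def AInfAct (g : PowerSeries F) (a : ℕ →₀ F) : ℕ →₀ F :=
  Finsupp.onFinset (Finset.range (a.support.sup id + 1))
    (fun m => ∑ i ∈ a.support, if m ≤ i then a i * PowerSeries.coeff (i - m) g else 0)
    (fun m h => by
      rw [Finset.mem_range, Nat.lt_succ_iff]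
      by_contra hc
      push_neg at hc
      exact h (Finset.sum_eq_zero fun i hi => by
        have h2 : id i ≤ a.support.sup id := Finset.le_sup hi
        simp only [id] at h2
        rw [if_neg (by omega)]))

/-- Multiplication of `A(∞) = (⊕_{i≥0} F aᵢ) ⊕ F[[x]]`:
`(a, f)·(b, g) = (a·g + b·f, fg)`, where `aᵢ aⱼ = 0` and `aᵢ · xʲ = a_{i-j}`
(`0` when `i < j`). -/
def AInfMul (u v : (ℕ →₀ F) × PowerSeries F) : (ℕ →₀ F) × PowerSeries F :=
  (AInfAct v.2 u.1 + AInfAct u.2 v.1, u.2 * v.2)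

/-- The trace functional of `A(∞)`: `t(a₀) = 1`, `t(aᵢ) = 0` for `i ≥ 1`,
`t(F[[x]]) = 0`. -/
def AInfTrace (u : (ℕ →₀ F) × PowerSeries F) : F := u.1 0

/- The key tool is the pairing `⟨a, h⟩ = Σ aᵢ hᵢ` between `⊕ F aᵢ` and `F[[x]]`: the action
is read off as `(a · g)_m = ⟨a, g xᵐ⟩` and is adjoint to multiplication, `⟨a · f, h⟩ = ⟨a, f h⟩`.
This gives the module laws, hence (1), and writes the trace form as
`t(uv) = ⟨u₁, v₂⟩ + ⟨v₁, u₂⟩`, from which (2) and (3) follow by testing against `xᵐ` and `aₘ`. -/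

open PowerSeries

section CoeffPairing

variable {R : Type*} [CommSemiring R]

def coeffPairing (a : ℕ →₀ R) (h : R⟦X⟧) : R :=
  Finsupp.linearCombination R (fun i => coeff i h) a

lemma coeffPairing_eq_sum (a : ℕ →₀ R) (h : R⟦X⟧) {s : Finset ℕ} (hs : a.support ⊆ s) :
    coeffPairing a h = ∑ i ∈ s, a i * coeff i h := by
  rw [coeffPairing, Finsupp.linearCombination_apply]
  exact Finsupp.sum_of_support_subset a hs _ (by simp)

@[simp]
lemma zero_coeffPairing (h : R⟦X⟧) : coeffPairing 0 h = 0 :=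
  map_zero _

@[simp]
lemma coeffPairing_zero (a : ℕ →₀ R) : coeffPairing a 0 = 0 := by
  simp [coeffPairing_eq_sum a _ subset_rfl]

lemma add_coeffPairing (a b : ℕ →₀ R) (h : R⟦X⟧) :
    coeffPairing (a + b) h = coeffPairing a h + coeffPairing b h :=
  map_add _ a b

@[simp]
lemma single_coeffPairing (n : ℕ) (c : R) (h : R⟦X⟧) :
    coeffPairing (Finsupp.single n c) h = c * coeff n h :=
  Finsupp.linearCombination_single R c n

@[simp]
lemma coeffPairing_X_pow (a : ℕ →₀ R) (m : ℕ) : coeffPairing a (X ^ m) = a m := by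
  simp [coeffPairing_eq_sum a _ subset_rfl, coeff_X_pow]

lemma eq_zero_of_forall_coeffPairing_eq_zero_left {a : ℕ →₀ R}
    (ha : ∀ h, coeffPairing a h = 0) : a = 0 := by
  ext m
  rw [← coeffPairing_X_pow a m, ha, Finsupp.coe_zero, Pi.zero_apply]

lemma eq_zero_of_forall_coeffPairing_eq_zero_right {h : R⟦X⟧}
    (hh : ∀ a, coeffPairing a h = 0) : h = 0 := by
  ext m
  simpa using hh (Finsupp.single m 1)

end CoeffPairing

lemma aInfAct_apply_eq_coeffPairing (g : F⟦X⟧) (a : ℕ →₀ F) (m : ℕ) :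
    AInfAct g a m = coeffPairing a (g * X ^ m) := by
  rw [coeffPairing_eq_sum a _ subset_rfl]
  exact Finset.sum_congr rfl fun i _ => by rw [coeff_mul_X_pow', mul_ite, mul_zero]

lemma aInfAct_apply_zero (g : F⟦X⟧) (a : ℕ →₀ F) : AInfAct g a 0 = coeffPairing a g := by
  simp [aInfAct_apply_eq_coeffPairing]

@[simp]
lemma aInfAct_zero (g : F⟦X⟧) : AInfAct g 0 = 0 := by
  ext m
  simp [aInfAct_apply_eq_coeffPairing]

lemma aInfAct_add (g : F⟦X⟧) (a b : ℕ →₀ F) :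
    AInfAct g (a + b) = AInfAct g a + AInfAct g b := by
  ext m
  simp only [Finsupp.add_apply, aInfAct_apply_eq_coeffPairing, add_coeffPairing]

lemma aInfAct_single_apply (f : F⟦X⟧) (n : ℕ) (c : F) (m : ℕ) :
    AInfAct f (Finsupp.single n c) m = if m ≤ n then c * coeff (n - m) f else 0 := by
  simp [aInfAct_apply_eq_coeffPairing, coeff_mul_X_pow']

lemma coeffPairing_aInfAct (f : F⟦X⟧) (a : ℕ →₀ F) (h : F⟦X⟧) :
    coeffPairing (AInfAct f a) h = coeffPairing a (f * h) := by
  induction a using Finsupp.induction with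
  | zero => simp
  | single_add n c b _ _ ih =>
    rw [aInfAct_add, add_coeffPairing, add_coeffPairing, ih, single_coeffPairing]
    congr 1
    have hsupp : (AInfAct f (Finsupp.single n c)).support ⊆ Finset.range (n + 1) := by
      intro m hm
      by_contra hmn
      simp_all [aInfAct_single_apply]
    rw [coeffPairing_eq_sum _ _ hsupp, mul_comm f, coeff_mul,
      Finset.Nat.sum_antidiagonal_eq_sum_range_succ (fun p q => coeff p h * coeff q f),
      Finset.mul_sum]
    refine Finset.sum_congr rfl fun m hm => ?_
    rw [aInfAct_single_apply, if_pos (Nat.lt_succ_iff.mp (Finset.mem_range.mp hm))]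
    ring

lemma aInfAct_aInfAct (f g : F⟦X⟧) (a : ℕ →₀ F) :
    AInfAct g (AInfAct f a) = AInfAct (f * g) a := by
  ext m
  rw [aInfAct_apply_eq_coeffPairing, coeffPairing_aInfAct, aInfAct_apply_eq_coeffPairing,
    mul_assoc]

@[simp]
lemma aInfAct_one (a : ℕ →₀ F) : AInfAct 1 a = a := by
  ext m
  simp [aInfAct_apply_eq_coeffPairing]

lemma aInfMul_comm (u v : (ℕ →₀ F) × F⟦X⟧) : AInfMul u v = AInfMul v u := by
  simp only [AInfMul, add_comm, mul_comm]

lemma aInfMul_assoc (u v w : (ℕ →₀ F) × F⟦X⟧) :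
    AInfMul (AInfMul u v) w = AInfMul u (AInfMul v w) := by
  refine Prod.ext ?_ (mul_assoc _ _ _)
  simp only [AInfMul, aInfAct_add, aInfAct_aInfAct, mul_comm w.2 u.2, mul_comm v.2 u.2]
  abel

lemma one_aInfMul (u : (ℕ →₀ F) × F⟦X⟧) : AInfMul (0, 1) u = u := by
  simp [AInfMul]

lemma aInfMul_one (u : (ℕ →₀ F) × F⟦X⟧) : AInfMul u (0, 1) = u := by
  simp [AInfMul]

lemma aInfTrace_aInfMul (u v : (ℕ →₀ F) × F⟦X⟧) :
    AInfTrace (AInfMul u v) = coeffPairing u.1 v.2 + coeffPairing v.1 u.2 := by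
  simp only [AInfTrace, AInfMul, Finsupp.add_apply, aInfAct_apply_zero]

lemma eq_zero_of_forall_aInfTrace_aInfMul_eq_zero {u : (ℕ →₀ F) × F⟦X⟧}
    (hu : ∀ v, AInfTrace (AInfMul u v) = 0) : u = 0 := by
  refine Prod.ext (eq_zero_of_forall_coeffPairing_eq_zero_left fun h => ?_)
    (eq_zero_of_forall_coeffPairing_eq_zero_right fun a => ?_)
  · simpa [aInfTrace_aInfMul] using hu (0, h)
  · simpa [aInfTrace_aInfMul] using hu (a, 0)

lemma forall_aInfTrace_aInfMul_eq_zero_iff (u : (ℕ →₀ F) × F⟦X⟧) :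
    (∀ f : F⟦X⟧, AInfTrace (AInfMul u (0, f)) = 0) ↔ ∃ f : F⟦X⟧, u = (0, f) := by
  simp only [aInfTrace_aInfMul, zero_coeffPairing, add_zero]
  constructor
  · exact fun hu => ⟨u.2, Prod.ext (eq_zero_of_forall_coeffPairing_eq_zero_left hu) rfl⟩
  · rintro ⟨f, rfl⟩ g
    exact zero_coeffPairing g

/-- For the trivial trace extension
`A(∞) = (⊕_{i≥0} F aᵢ) ⊕ F[[x]]` of `F[[x]]` with trace functional `t`:
(1) `A(∞)` is a commutative associative unital `F`-algebra with unit `(0, 1)`;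
(2) the bilinear form `(u,v) ↦ t(uv)` is non-degenerate;
(3) the orthogonal complement of `F[[x]] = {(0, f)}` with respect to this form is
`F[[x]]` itself. -/
theorem trivial_trace_extension_properties (F : Type*) [Field F] :
    -- (1) commutativity, associativity, unitality
    (∀ u v : (ℕ →₀ F) × PowerSeries F, AInfMul u v = AInfMul v u) ∧
    (∀ u v w : (ℕ →₀ F) × PowerSeries F,
      AInfMul (AInfMul u v) w = AInfMul u (AInfMul v w)) ∧
    (∀ u : (ℕ →₀ F) × PowerSeries F,
      AInfMul (0, 1) u = u ∧ AInfMul u (0, 1) = u) ∧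
    -- (2) non-degeneracy of the trace form
    (∀ u : (ℕ →₀ F) × PowerSeries F,
      (∀ v : (ℕ →₀ F) × PowerSeries F, AInfTrace (AInfMul u v) = 0) → u = 0) ∧
    -- (3) the orthogonal complement of `F[[x]]` equals `F[[x]]`
    (∀ u : (ℕ →₀ F) × PowerSeries F,
      (∀ f : PowerSeries F, AInfTrace (AInfMul u (0, f)) = 0) ↔
      ∃ f : PowerSeries F, u = (0, f)) := by
  exact ⟨aInfMul_comm, aInfMul_assoc, fun u => ⟨one_aInfMul u, aInfMul_one u⟩,
    fun _ => eq_zero_of_forall_aInfTrace_aInfMul_eq_zero, forall_aInfTrace_aInfMul_eq_zero_iff⟩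

end
end
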